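/- The map M ↦ 𝔚_M := { w bracket pattern : A(w) ⊆ ℕ₀ \ M } is an injection from submonoids M of (ℕ₀,+) to bracket pattern categories; indeed M can be recovered as M = ℕ₀ \ ⋃_{w ∈ 𝔚_M} A(w). -/
import Mathlib

/-- The frame of a bracket pattern: its maximum (sup). -/
def frame (w : Finset ℕ) : ℕ := w.sup id

/-- The dual of a bracket pattern: `w† = { ‖w‖ - i : i ∈ ℕ₀, i < ‖w‖, i ∉ w }`. -/
def dual (w : Finset ℕ) : Finset ℕ :=
  ((Finset.range (frame w)).filter (fun i => i ∉ w)).image (fun i => frame w - i)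

/-- The completion of a bracket pattern: `A(w) = { j - i : j ∈ w, i ∈ ℕ₀, i ∉ w, i < j }`. -/
def completion (w : Finset ℕ) : Finset ℕ :=
  w.biUnion (fun j => ((Finset.range j).filter (fun i => i ∉ w)).image (fun i => j - i))

/-- The `j`-projection of a bracket pattern: `∩_j w = { i ∈ w : i ≤ j }`. -/
def proj (j : ℕ) (w : Finset ℕ) : Finset ℕ := w.filter (fun i => i ≤ j)

/-- A bracket pattern is a nonempty finite subset of ℕ = {1,2,...}. -/
def IsBracketPattern (w : Finset ℕ) : Prop := w.Nonempty ∧ 0 ∉ w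

/-- A bracket pattern category: a set of bracket patterns closed under
superposition (union), dualisation and projections. -/
def IsBPCategory (W : Set (Finset ℕ)) : Prop :=
  (∀ w ∈ W, IsBracketPattern w) ∧
  (∀ w ∈ W, ∀ w' ∈ W, w ∪ w' ∈ W) ∧
  (∀ w ∈ W, dual w ∈ W) ∧
  (∀ w ∈ W, ∀ j ∈ w, proj j w ∈ W)

/-- The bracket pattern category generated by a set of bracket patterns. -/
def genBP (S : Set (Finset ℕ)) : Set (Finset ℕ) :=
  ⋂₀ {W | IsBPCategory W ∧ S ⊆ W}

/-- The bracket pattern category of a submonoid `M` of `(ℕ₀,+)`: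
all bracket patterns `w` with `A(w) ⊆ ℕ₀ \ M`. -/
def WM (M : AddSubmonoid ℕ) : Set (Finset ℕ) :=
  {w : Finset ℕ | IsBracketPattern w ∧ ∀ n ∈ completion w, n ∉ M}

lemma mem_completion {w : Finset ℕ} {n : ℕ} :
    n ∈ completion w ↔ ∃ j ∈ w, ∃ i, i < j ∧ i ∉ w ∧ j - i = n := by
  simp only [completion, Finset.mem_biUnion, Finset.mem_image, Finset.mem_filter,
    Finset.mem_range]
  tauto

lemma mem_dual {w : Finset ℕ} {k : ℕ} :
    k ∈ dual w ↔ ∃ i, i < frame w ∧ i ∉ w ∧ frame w - i = k := by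
  simp only [dual, Finset.mem_image, Finset.mem_filter, Finset.mem_range]
  tauto

lemma frame_mem {w : Finset ℕ} (hw : w.Nonempty) : frame w ∈ w := by
  obtain ⟨b, hb, h⟩ := Finset.exists_mem_eq_sup w hw id
  simpa [frame, h] using hb

lemma le_frame {w : Finset ℕ} {k : ℕ} (hk : k ∈ w) : k ≤ frame w :=
  Finset.le_sup (f := id) hk

lemma frame_pos {w : Finset ℕ} (hw : IsBracketPattern w) : 0 < frame w := by
  obtain ⟨⟨x, hx⟩, h0⟩ := hw
  have := le_frame hx
  have : x ≠ 0 := fun h => h0 (h ▸ hx)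
  omega

lemma dual_isBracketPattern {w : Finset ℕ} (hw : IsBracketPattern w) :
    IsBracketPattern (dual w) := by
  constructor
  · exact ⟨frame w, mem_dual.mpr ⟨0, frame_pos hw, hw.2, rfl⟩⟩
  · intro h0
    obtain ⟨i, hi, _, hfi⟩ := mem_dual.mp h0
    omega

lemma completion_dual_subset {w : Finset ℕ} (hw : IsBracketPattern w) :
    completion (dual w) ⊆ completion w := by
  intro n hn
  rw [mem_completion] at hn ⊢
  obtain ⟨j, hj, i', hi'lt, hi'not, rfl⟩ := hn
  obtain ⟨i, hilt, hinot, rfl⟩ := mem_dual.mp hj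
  have hm : frame w ∈ w := frame_mem hw.1
  have hk : frame w - i' ∈ w := by
    by_contra hk
    rcases (by omega : i' = 0 ∨ frame w - i' < frame w) with h | h
    · exact hk (by simpa [h] using hm)
    · exact hi'not (mem_dual.mpr ⟨frame w - i', h, hk, by omega⟩)
  exact ⟨frame w - i', hk, i, by omega, hinot, by omega⟩

lemma completion_union_subset {w w' : Finset ℕ} :
    completion (w ∪ w') ⊆ completion w ∪ completion w' := by
  intro n hn
  rw [mem_completion] at hn
  obtain ⟨j, hj, i, hilt, hinot, rfl⟩ := hn
  rw [Finset.mem_union] at hj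
  simp only [Finset.mem_union, not_or] at hinot
  rcases hj with hj | hj
  · exact Finset.mem_union_left _ (mem_completion.mpr ⟨j, hj, i, hilt, hinot.1, rfl⟩)
  · exact Finset.mem_union_right _ (mem_completion.mpr ⟨j, hj, i, hilt, hinot.2, rfl⟩)

lemma completion_proj_subset {w : Finset ℕ} {j : ℕ} (hj : j ∈ w) :
    completion (proj j w) ⊆ completion w := by
  intro n hn
  rw [mem_completion] at hn ⊢
  obtain ⟨j', hj', i, hilt, hinot, rfl⟩ := hn
  rw [proj, Finset.mem_filter] at hj'
  refine ⟨j', hj'.1, i, hilt, fun hi => ?_, rfl⟩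
  exact hinot (by rw [proj, Finset.mem_filter]; exact ⟨hi, by omega⟩)

open Classical in
/-- The witness pattern: all nonmembers of `M` in `[1, n]`. -/
noncomputable def wOf (M : AddSubmonoid ℕ) (n : ℕ) : Finset ℕ :=
  (Finset.range (n + 1)).filter (fun k => k ∉ M)

lemma mem_wOf {M : AddSubmonoid ℕ} {n k : ℕ} :
    k ∈ wOf M n ↔ k ≤ n ∧ k ∉ M := by
  classical
  simp only [wOf, Finset.mem_filter, Finset.mem_range]
  constructor <;> exact fun h => ⟨by omega, by convert h.2⟩

lemma wOf_mem_WM {M : AddSubmonoid ℕ} {n : ℕ} (hn : n ∉ M) : wOf M n ∈ WM M := by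
  have hn0 : n ≠ 0 := fun h => hn (h ▸ M.zero_mem)
  refine ⟨⟨⟨n, mem_wOf.mpr ⟨le_refl n, hn⟩⟩, fun h => (mem_wOf.mp h).2 M.zero_mem⟩, ?_⟩
  intro a ha haM
  obtain ⟨j, hj, i, hilt, hinot, rfl⟩ := mem_completion.mp ha
  obtain ⟨hjn, hjM⟩ := mem_wOf.mp hj
  have hiM : i ∈ M := by
    by_contra hiM
    exact hinot (mem_wOf.mpr ⟨by omega, hiM⟩)
  have : (j - i) + i ∈ M := M.add_mem haM hiM
  rw [Nat.sub_add_cancel (le_of_lt hilt)] at this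
  exact hjM this

lemma mem_completion_wOf {M : AddSubmonoid ℕ} {n : ℕ} (hn : n ∉ M) :
    n ∈ completion (wOf M n) := by
  have hn0 : n ≠ 0 := fun h => hn (h ▸ M.zero_mem)
  exact mem_completion.mpr ⟨n, mem_wOf.mpr ⟨le_refl n, hn⟩, 0, by omega,
    fun h => (mem_wOf.mp h).2 M.zero_mem, by omega⟩

lemma recovery (M : AddSubmonoid ℕ) :
    (M : Set ℕ) = (⋃ w ∈ WM M, (completion w : Set ℕ))ᶜ := by
  ext n
  simp only [Set.mem_compl_iff, Set.mem_iUnion, not_exists, SetLike.mem_coe,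
    Finset.coe_sort_coe, Finset.mem_coe]
  constructor
  · intro hnM w hw hn
    exact hw.2 n hn hnM
  · intro h
    by_contra hnM
    exact h (wOf M n) (wOf_mem_WM hnM) (mem_completion_wOf hnM)

theorem WM_injective_and_recovery :
    (∀ M : AddSubmonoid ℕ, IsBPCategory (WM M)) ∧
    Function.Injective WM ∧
    (∀ M : AddSubmonoid ℕ,
      (M : Set ℕ) = (⋃ w ∈ WM M, (completion w : Set ℕ))ᶜ) := by
  refine ⟨?_, ?_, recovery⟩
  · intro M
    refine ⟨fun w hw => hw.1, ?_, ?_, ?_⟩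
    · rintro w ⟨⟨⟨x, hx⟩, h0⟩, hA⟩ w' ⟨⟨_, h0'⟩, hA'⟩
      refine ⟨⟨⟨x, Finset.mem_union_left _ hx⟩, ?_⟩, ?_⟩
      · simp only [Finset.mem_union, not_or]; exact ⟨h0, h0'⟩
      · intro n hn
        rcases Finset.mem_union.mp (completion_union_subset hn) with h | h
        · exact hA n h
        · exact hA' n h
    · rintro w ⟨hbp, hA⟩
      exact ⟨dual_isBracketPattern hbp, fun n hn => hA n (completion_dual_subset hbp hn)⟩
    · rintro w ⟨hbp, hA⟩ j hj
      refine ⟨⟨⟨j, ?_⟩, ?_⟩, fun n hn => hA n (completion_proj_subset hj hn)⟩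
      · rw [proj, Finset.mem_filter]; exact ⟨hj, le_refl j⟩
      · rw [proj, Finset.mem_filter]; exact fun h => hbp.2 h.1
  · intro M M' h
    apply SetLike.coe_injective
    rw [recovery M, h, ← recovery M']
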